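/- arXiv:1810.04393 — 4 statements merged into one kernel-verified Lean document; each statement's English description precedes it below -/
import Mathlib

section
/- Let n ≥ 1, n < p < ∞, c ∈ ℝ, and let x0, y0 ∈ ℝⁿ be distinct. Let u : ℝⁿ → ℝ be differentiable with ∫_{ℝⁿ} ‖∇u‖^p dx < ∞, and suppose u satisfies the weak p-Laplace identity at (x0, y0) with constant c. Then for every differentiable v : ℝⁿ → ℝ with ∫_{ℝⁿ} ‖∇v‖^p dx < ∞, v(x0) = u(x0), and v(y0) = u(y0), one has ∫_{ℝⁿ} ‖∇u‖^p dx ≤ ∫_{ℝⁿ} ‖∇v‖^p dx. -/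
open MeasureTheory RealInnerProductSpace

/-- `u` satisfies the weak p-Laplace identity at the distinct points `x0, y0` with
constant `c`: for every differentiable test function `φ` with `‖∇φ‖^p` integrable,
the integrand `‖∇u‖^(p-2) ⟪∇u, ∇φ⟫` is integrable and its integral equals
`c (φ x0 - φ y0)`. -/
def WeakPLaplace (n : ℕ) (p : ℝ) (u : EuclideanSpace ℝ (Fin n) → ℝ)
    (x0 y0 : EuclideanSpace ℝ (Fin n)) (c : ℝ) : Prop :=
  ∀ φ : EuclideanSpace ℝ (Fin n) → ℝ, Differentiable ℝ φ →
    Integrable (fun x => ‖gradient φ x‖ ^ p) →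
      Integrable (fun x => ‖gradient u x‖ ^ (p - 2) * ⟪gradient u x, gradient φ x⟫) ∧
      ∫ x, ‖gradient u x‖ ^ (p - 2) * ⟪gradient u x, gradient φ x⟫ = c * (φ x0 - φ y0)

/-!
Testing the weak identity with `φ = v - u`, which vanishes at `x0` and `y0`, gives
`∫ ‖∇u‖^(p-2) ⟪∇u, ∇v - ∇u⟫ = 0`. Since `a ↦ ‖a‖^p / p` is convex with gradient
`‖a‖^(p-2) a`, the integrand is bounded pointwise by `(‖∇v‖^p - ‖∇u‖^p) / p`, so the
energy of `v` is at least that of `u`.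
-/

section InnerProductSpace

variable {E : Type*} [NormedAddCommGroup E] [InnerProductSpace ℝ E] {p : ℝ}

theorem norm_rpow_sub_two_mul_inner_self (hp : 0 < p) (a : E) :
    ‖a‖ ^ (p - 2) * ⟪a, a⟫ = ‖a‖ ^ p := by
  rcases eq_or_ne a 0 with rfl | ha
  · simp [Real.zero_rpow hp.ne']
  · rw [real_inner_self_eq_norm_sq, ← Real.rpow_natCast, ← Real.rpow_add (norm_pos_iff.mpr ha)]
    norm_num

-- Young's inequality with the conjugate exponents `p / (p - 1)` and `p`.
theorem norm_rpow_sub_two_mul_inner_le (hp : 1 < p) (a b : E) :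
    ‖a‖ ^ (p - 2) * ⟪a, b⟫ ≤ (1 - 1 / p) * ‖a‖ ^ p + ‖b‖ ^ p / p := by
  have hpq : (p / (p - 1)).HolderConjugate p := (Real.HolderConjugate.conjExponent hp).symm
  have hsub : ‖a‖ ^ (p - 2) * ‖a‖ = ‖a‖ ^ (p - 1) := by
    rcases eq_or_ne a 0 with rfl | ha
    · simp [Real.zero_rpow (sub_ne_zero.mpr hp.ne')]
    · rw [← Real.rpow_add_one (norm_ne_zero_iff.mpr ha)]
      ring_nf
  have hpow : (‖a‖ ^ (p - 1)) ^ (p / (p - 1)) = ‖a‖ ^ p := by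
    rw [← Real.rpow_mul (norm_nonneg a), hpq.symm.sub_one_mul_conj]
  calc ‖a‖ ^ (p - 2) * ⟪a, b⟫ ≤ ‖a‖ ^ (p - 2) * (‖a‖ * ‖b‖) := by
        gcongr; exact real_inner_le_norm a b
    _ = ‖a‖ ^ (p - 1) * ‖b‖ := by rw [← mul_assoc, hsub]
    _ ≤ (‖a‖ ^ (p - 1)) ^ (p / (p - 1)) / (p / (p - 1)) + ‖b‖ ^ p / p :=
        Real.young_inequality_of_nonneg (by positivity) (norm_nonneg b) hpq
    _ = (1 - 1 / p) * ‖a‖ ^ p + ‖b‖ ^ p / p := by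
        rw [hpow]
        field_simp

theorem norm_rpow_sub_two_mul_inner_sub_le (hp : 1 < p) (a b : E) :
    ‖a‖ ^ (p - 2) * ⟪a, b - a⟫ ≤ (‖b‖ ^ p - ‖a‖ ^ p) / p := by
  have := norm_rpow_sub_two_mul_inner_le hp a b
  rw [inner_sub_right, mul_sub, norm_rpow_sub_two_mul_inner_self (by linarith) a]
  have hp0 : p ≠ 0 := by positivity
  field_simp at this ⊢
  linarith

end InnerProductSpace

section Integral

variable {α E : Type*} [MeasurableSpace α] {μ : Measure α} [NormedAddCommGroup E] {p : ℝ}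
  {f g : α → E}

theorem integrable_norm_sub_rpow (hp : 0 < p) (hf : AEStronglyMeasurable f μ)
    (hg : AEStronglyMeasurable g μ) (hfi : Integrable (fun x => ‖f x‖ ^ p) μ)
    (hgi : Integrable (fun x => ‖g x‖ ^ p) μ) :
    Integrable (fun x => ‖f x - g x‖ ^ p) μ := by
  have hp' : ENNReal.ofReal p ≠ 0 := by simpa using hp
  rw [← ENNReal.toReal_ofReal hp.le] at hfi hgi ⊢
  rw [integrable_norm_rpow_iff hf hp' ENNReal.ofReal_ne_top] at hfi
  rw [integrable_norm_rpow_iff hg hp' ENNReal.ofReal_ne_top] at hgi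
  exact (integrable_norm_rpow_iff (hf.sub hg) hp' ENNReal.ofReal_ne_top).2 (hfi.sub hgi)

theorem integral_norm_rpow_le_of_integral_inner_sub_eq_zero [InnerProductSpace ℝ E]
    (hp : 1 < p) (hfi : Integrable (fun x => ‖f x‖ ^ p) μ)
    (hgi : Integrable (fun x => ‖g x‖ ^ p) μ)
    (hfg : Integrable (fun x => ‖f x‖ ^ (p - 2) * ⟪f x, g x - f x⟫) μ)
    (h : ∫ x, ‖f x‖ ^ (p - 2) * ⟪f x, g x - f x⟫ ∂μ = 0) :
    ∫ x, ‖f x‖ ^ p ∂μ ≤ ∫ x, ‖g x‖ ^ p ∂μ := by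
  have key : 0 ≤ ((∫ x, ‖g x‖ ^ p ∂μ) - ∫ x, ‖f x‖ ^ p ∂μ) / p :=
    calc 0 = ∫ x, ‖f x‖ ^ (p - 2) * ⟪f x, g x - f x⟫ ∂μ := h.symm
      _ ≤ ∫ x, (‖g x‖ ^ p - ‖f x‖ ^ p) / p ∂μ :=
        integral_mono hfg ((hgi.sub hfi).div_const p)
          fun x => norm_rpow_sub_two_mul_inner_sub_le hp (f x) (g x)
      _ = _ := by rw [integral_div, integral_sub hgi hfi]
  rwa [le_div_iff₀ (by linarith), zero_mul, sub_nonneg] at key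

end Integral

section Gradient

variable {F : Type*} [NormedAddCommGroup F] [InnerProductSpace ℝ F] [CompleteSpace F]

theorem gradient_fun_sub {f g : F → ℝ} {x : F} (hf : DifferentiableAt ℝ f x)
    (hg : DifferentiableAt ℝ g x) :
    gradient (fun y => f y - g y) x = gradient f x - gradient g x := by
  simp only [gradient, fderiv_fun_sub hf hg, map_sub]

theorem measurable_gradient [MeasurableSpace F] [BorelSpace F] (f : F → ℝ) :
    Measurable (gradient f) :=
  (InnerProductSpace.toDual ℝ F).symm.continuous.measurable.comp (measurable_fderiv ℝ f)

end Gradient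

theorem WeakPLaplace.integral_inner_sub_eq {n : ℕ} {p c : ℝ}
    {u v : EuclideanSpace ℝ (Fin n) → ℝ} {x0 y0 : EuclideanSpace ℝ (Fin n)}
    (hweak : WeakPLaplace n p u x0 y0 c) (hp : 0 < p)
    (hu : Differentiable ℝ u) (hv : Differentiable ℝ v)
    (hui : Integrable (fun x => ‖gradient u x‖ ^ p))
    (hvi : Integrable (fun x => ‖gradient v x‖ ^ p)) :
    Integrable (fun x =>
        ‖gradient u x‖ ^ (p - 2) * ⟪gradient u x, gradient v x - gradient u x⟫) ∧
      ∫ x, ‖gradient u x‖ ^ (p - 2) * ⟪gradient u x, gradient v x - gradient u x⟫ =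
        c * ((v x0 - u x0) - (v y0 - u y0)) := by
  have hgrad : gradient (fun x => v x - u x) = fun x => gradient v x - gradient u x :=
    funext fun x => gradient_fun_sub (hv x) (hu x)
  have hφi : Integrable (fun x => ‖gradient (fun x => v x - u x) x‖ ^ p) := by
    rw [hgrad]
    exact integrable_norm_sub_rpow hp (measurable_gradient v).aestronglyMeasurable
      (measurable_gradient u).aestronglyMeasurable hvi hui
  simpa only [hgrad] using hweak (fun x => v x - u x) (hv.sub hu) hφi

theorem weak_pde_implies_minimizer_general (n : ℕ) (hn : 1 ≤ n) (p : ℝ) (hp : (n : ℝ) < p)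
    (c : ℝ) (x0 y0 : EuclideanSpace ℝ (Fin n))
    (u : EuclideanSpace ℝ (Fin n) → ℝ) (hu : Differentiable ℝ u)
    (hui : Integrable (fun x => ‖gradient u x‖ ^ p))
    (hweak : WeakPLaplace n p u x0 y0 c) :
    ∀ v : EuclideanSpace ℝ (Fin n) → ℝ, Differentiable ℝ v →
      Integrable (fun x => ‖gradient v x‖ ^ p) →
      v x0 = u x0 → v y0 = u y0 →
      ∫ x, ‖gradient u x‖ ^ p ≤ ∫ x, ‖gradient v x‖ ^ p := by
  intro v hv hvi hvx hvy
  have hp1 : 1 < p := lt_of_le_of_lt (by exact_mod_cast hn) hp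
  obtain ⟨hint, heq⟩ := hweak.integral_inner_sub_eq (by linarith) hu hv hui hvi
  rw [hvx, hvy, sub_self, sub_self, sub_zero, mul_zero] at heq
  exact integral_norm_rpow_le_of_integral_inner_sub_eq_zero hp1 hui hvi hint heq

/-- A solution of the weak p-Laplace identity at `(x0, y0)` minimizes the p-Dirichlet
energy among all admissible functions with the same values at `x0` and `y0`. -/
theorem weak_pde_implies_minimizer (n : ℕ) (hn : 1 ≤ n) (p : ℝ) (hp : (n : ℝ) < p)
    (c : ℝ) (x0 y0 : EuclideanSpace ℝ (Fin n)) (hxy : x0 ≠ y0)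
    (u : EuclideanSpace ℝ (Fin n) → ℝ) (hu : Differentiable ℝ u)
    (hui : Integrable (fun x => ‖gradient u x‖ ^ p))
    (hweak : WeakPLaplace n p u x0 y0 c) :
    ∀ v : EuclideanSpace ℝ (Fin n) → ℝ, Differentiable ℝ v →
      Integrable (fun x => ‖gradient v x‖ ^ p) →
      v x0 = u x0 → v y0 = u y0 →
      ∫ x, ‖gradient u x‖ ^ p ≤ ∫ x, ‖gradient v x‖ ^ p :=
  weak_pde_implies_minimizer_general n hn p hp c x0 y0 u hu hui hweak
end

section
/- Let s ≥ t > 0 and let x, y ∈ ℝ² with ‖x‖ = ‖y‖ = t + s. If ‖y − x‖ > s, then there exist m ∈ {1, …, 7} and points z_1, …, z_m ∈ ℝ² such that ‖z_1‖ = ⋯ = ‖z_m‖ = t + s, ‖x − z_1‖ = ‖z_1 − z_2‖ = ⋯ = ‖z_{m−1} − z_m‖ = s, and ‖y − z_m‖ ≤ s. -/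
/-!
Identify the plane with `ℂ` and put `R = t + s`. A chord of length `s` of the circle of radius
`R` subtends the angle `θ = 2 arcsin (s / 2R)`, and `t ≤ s` gives `s / 2R ≥ 1/4`, hence
`θ > π / 7`. After a conjugation, `y = x e^{iα}` with `α ∈ [0, π]`, and `‖y - x‖ > s` means
`α > θ`. The points `z k = x e^{ikθ}`, `k ≤ m = ⌊α / θ⌋`, are at consecutive distances `s`,
the last one is at angle `α - mθ < θ` from `y`, and `m ≤ 7` because `α ≤ π < 7θ`.
-/

open Complex ComplexConjugate Real Set

section CircleChain

variable {E F : Type*} [SeminormedAddCommGroup E] [NormedSpace ℝ E] [SeminormedAddCommGroup F]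
  [NormedSpace ℝ F]

def IsCircleChain (r s : ℝ) (x y : E) (m : ℕ) (z : ℕ → E) : Prop :=
  (∀ i, 1 ≤ i → i ≤ m → ‖z i‖ = r) ∧ ‖x - z 1‖ = s ∧
    (∀ i, 1 ≤ i → i < m → ‖z i - z (i + 1)‖ = s) ∧ ‖y - z m‖ ≤ s

theorem IsCircleChain.map {r s : ℝ} {x y : E} {m : ℕ} {z : ℕ → E}
    (h : IsCircleChain r s x y m z) (f : E →ₗᵢ[ℝ] F) :
    IsCircleChain r s (f x) (f y) m (f ∘ z) := by
  obtain ⟨hz, hx, hstep, hy⟩ := h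
  refine ⟨fun i h₁ h₂ => ?_, ?_, fun i h₁ h₂ => ?_, ?_⟩ <;>
    simp only [Function.comp_apply, ← map_sub, LinearIsometry.norm_map] <;> aesop

theorem IsCircleChain.map_symm {r s : ℝ} {x y : F} {m : ℕ} {z : ℕ → E} (f : E ≃ₗᵢ[ℝ] F)
    (h : IsCircleChain r s (f.symm x) (f.symm y) m z) : IsCircleChain r s x y m (f ∘ z) := by
  simpa using h.map f.toLinearIsometry

end CircleChain

namespace Real

theorem mul_abs_two_mul_sin_half_le_iff {R s a : ℝ} (hR : 0 < R) (hs₀ : 0 ≤ s)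
    (hs : s ≤ 2 * R) (ha : a ∈ Icc 0 π) :
    R * |2 * sin (a / 2)| ≤ s ↔ a ≤ 2 * arcsin (s / (2 * R)) := by
  have hsin : 0 ≤ sin (a / 2) :=
    sin_nonneg_of_nonneg_of_le_pi (by linarith [ha.1]) (by linarith [ha.2, pi_pos])
  have hq : s / (2 * R) ∈ Icc (-1) 1 :=
    ⟨by linarith [div_nonneg hs₀ (by positivity : 0 ≤ 2 * R)],
      (div_le_one (by positivity)).2 hs⟩
  have key := le_arcsin_iff_sin_le (x := a / 2) ⟨by linarith [ha.1, pi_pos], by linarith [ha.2]⟩ hq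
  rw [le_div_iff₀ (by positivity)] at key
  rw [abs_of_nonneg (by positivity)]
  constructor <;> intro h
  · linarith [key.2 (by linarith)]
  · linarith [key.1 (by linarith)]

theorem mul_abs_two_mul_sin_arcsin {R s : ℝ} (hR : 0 < R) (hs₀ : 0 ≤ s) (hs : s ≤ 2 * R) :
    R * |2 * sin (arcsin (s / (2 * R)))| = s := by
  rw [sin_arcsin (by linarith [div_nonneg hs₀ (by positivity : 0 ≤ 2 * R)])
    ((div_le_one (by positivity)).2 hs), abs_of_nonneg (by positivity)]
  field_simp

theorem pi_div_seven_lt_two_mul_arcsin {q : ℝ} (hq : 1 / 4 ≤ q) : π / 7 < 2 * arcsin q := by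
  have hsin : sin (π / 14) < q := by
    linarith [sin_lt (by positivity : 0 < π / 14), pi_lt_d2]
  have := (lt_arcsin_iff_sin_lt' ⟨by linarith [pi_pos], by linarith [pi_pos]⟩).2 hsin
  linarith

end Real

namespace Complex

theorem norm_mul_exp_sub_mul_exp (x : ℂ) (u v : ℝ) :
    ‖x * exp (u * I) - x * exp (v * I)‖ = ‖x‖ * |2 * Real.sin ((v - u) / 2)| := by
  have hsplit : x * exp (u * I) - x * exp (v * I)
      = -(x * exp (u * I)) * (exp (I * ↑(v - u)) - 1) := by
    have : exp (v * I) = exp (u * I) * exp (I * ↑(v - u)) := by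
      rw [← exp_add]; push_cast; ring_nf
    rw [this]; ring
  rw [hsplit, norm_mul, norm_neg, norm_mul, norm_exp_ofReal_mul_I, mul_one,
    norm_exp_I_mul_ofReal_sub_one, Real.norm_eq_abs]

theorem exists_mem_Icc_eq_mul_exp_or_conj {x y : ℂ} (hx : x ≠ 0) (hxy : ‖x‖ = ‖y‖) :
    ∃ α ∈ Icc 0 π, y = x * exp (α * I) ∨ conj y = conj x * exp (α * I) := by
  have hdiv : exp (arg (y / x) * I) = y / x := by
    simpa [norm_div, hxy, div_self (hxy ▸ norm_ne_zero_iff.2 hx)] using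
      norm_mul_exp_arg_mul_I (y / x)
  obtain ⟨δ, hδ, hy⟩ : ∃ δ ∈ Ioc (-π) π, y = x * exp (δ * I) :=
    ⟨arg (y / x), ⟨neg_pi_lt_arg _, arg_le_pi _⟩, by rw [hdiv, mul_div_cancel₀ _ hx]⟩
  rcases le_or_gt 0 δ with h | h
  · exact ⟨δ, ⟨h, hδ.2⟩, .inl hy⟩
  · refine ⟨-δ, ⟨by linarith, by linarith [hδ.1]⟩, .inr ?_⟩
    rw [hy, map_mul, ← exp_conj]
    simp

theorem exists_isCircleChain_mul_exp {s t : ℝ} (hts : t ≤ s) (ht : 0 < t) {x : ℂ}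
    (hx : ‖x‖ = t + s) {α : ℝ} (hα : α ∈ Icc 0 π) (hxy : s < ‖x * exp (α * I) - x‖) :
    ∃ (m : ℕ) (z : ℕ → ℂ), 1 ≤ m ∧ m ≤ 7 ∧ IsCircleChain (t + s) s x (x * exp (α * I)) m z := by
  have hR : 0 < t + s := by linarith
  have hs₀ : 0 ≤ s := by linarith
  have hs : s ≤ 2 * (t + s) := by linarith
  set θ := 2 * arcsin (s / (2 * (t + s)))
  have hchord : ∀ a ∈ Icc 0 π, (t + s) * |2 * Real.sin (a / 2)| ≤ s ↔ a ≤ θ :=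
    fun a ha => mul_abs_two_mul_sin_half_le_iff hR hs₀ hs ha
  have hθ : (t + s) * |2 * Real.sin (θ / 2)| = s := by
    rw [mul_div_cancel_left₀ _ two_ne_zero, mul_abs_two_mul_sin_arcsin hR hs₀ hs]
  have hθ7 : π < 7 * θ := by
    have := pi_div_seven_lt_two_mul_arcsin (q := s / (2 * (t + s)))
      (by rw [le_div_iff₀ (by positivity)]; linarith)
    linarith
  have hθα : θ < α := by
    have hxα := norm_mul_exp_sub_mul_exp x 0 α
    simp only [ofReal_zero, zero_mul, Complex.exp_zero, mul_one, sub_zero, hx] at hxα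
    rwa [← not_le, ← hchord α hα, ← hxα, norm_sub_rev, not_le]
  have hθ0 : 0 < θ := by linarith [pi_pos]
  set m := ⌊α / θ⌋₊
  have hmα : m * θ ≤ α := (le_div_iff₀ hθ0).1 (Nat.floor_le (div_nonneg hα.1 hθ0.le))
  have hαm : α < (m + 1) * θ := (div_lt_iff₀ hθ0).1 (Nat.lt_floor_add_one _)
  set z : ℕ → ℂ := fun i => x * exp ((i * θ : ℝ) * I)
  have hstep : ∀ i : ℕ, ‖z i - z (i + 1)‖ = s := by
    intro i
    rw [norm_mul_exp_sub_mul_exp, hx]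
    convert hθ using 5
    push_cast
    ring
  refine ⟨m, z, Nat.le_floor ?_, ((Nat.floor_lt (div_nonneg hα.1 hθ0.le)).2 ?_).le,
    fun i _ _ => ?_, by simpa [z] using hstep 0, fun i _ _ => hstep i, ?_⟩
  · rw [Nat.cast_one, le_div_iff₀ hθ0]; linarith
  · rw [div_lt_iff₀ hθ0]; push_cast; linarith [hα.2]
  · rw [norm_mul, norm_exp_ofReal_mul_I, mul_one, hx]
  · rw [norm_sub_rev, norm_mul_exp_sub_mul_exp, hx, hchord _ ⟨by linarith, by linarith [hα.2]⟩]
    linarith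

theorem exists_isCircleChain {s t : ℝ} (hts : t ≤ s) (ht : 0 < t) {x y : ℂ}
    (hx : ‖x‖ = t + s) (hy : ‖y‖ = t + s) (hxy : s < ‖y - x‖) :
    ∃ (m : ℕ) (z : ℕ → ℂ), 1 ≤ m ∧ m ≤ 7 ∧ IsCircleChain (t + s) s x y m z := by
  have hx0 : x ≠ 0 := by rintro rfl; rw [norm_zero] at hx; linarith
  obtain ⟨α, hα, rfl | hconj⟩ := exists_mem_Icc_eq_mul_exp_or_conj hx0 (hx.trans hy.symm)
  · exact exists_isCircleChain_mul_exp hts ht hx hα hxy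
  · obtain ⟨m, z, hm1, hm7, hz⟩ := exists_isCircleChain_mul_exp hts ht (x := conj x)
      (by rwa [norm_conj]) hα (by rwa [← hconj, ← map_sub, norm_conj])
    rw [← hconj] at hz
    exact ⟨m, _, hm1, hm7, hz.map_symm conjLIE⟩

end Complex

/-- Chain lemma on the circle of radius `t + s` (`s ≥ t > 0`) in `ℝ²`: if `x, y` lie on
this circle with `‖y - x‖ > s`, there is a chain of at most `7` points on the circle
starting at distance `s` from `x`, with consecutive distances `s`, ending within
distance `s` of `y`. -/
theorem circle_chain_lemma_scaled (s t : ℝ) (hts : t ≤ s) (ht : 0 < t)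
    (x y : EuclideanSpace ℝ (Fin 2))
    (hx : ‖x‖ = t + s) (hy : ‖y‖ = t + s) (hxy : s < ‖y - x‖) :
    ∃ (m : ℕ) (z : ℕ → EuclideanSpace ℝ (Fin 2)),
      1 ≤ m ∧ m ≤ 7 ∧
      (∀ i, 1 ≤ i → i ≤ m → ‖z i‖ = t + s) ∧
      ‖x - z 1‖ = s ∧
      (∀ i, 1 ≤ i → i < m → ‖z i - z (i + 1)‖ = s) ∧
      ‖y - z m‖ ≤ s := by
  set f := Complex.orthonormalBasisOneI.repr
  obtain ⟨m, z, hm1, hm7, hz⟩ := Complex.exists_isCircleChain hts ht (x := f.symm x)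
    (y := f.symm y) (by rwa [f.symm.norm_map]) (by rwa [f.symm.norm_map])
    (by rwa [← map_sub, f.symm.norm_map])
  exact ⟨m, _, hm1, hm7, hz.map_symm f⟩
end

section
/- Let n ≥ 2, let s ≥ t > 0, and let x, y ∈ ℝⁿ with ‖y‖ ≥ ‖x‖ = t + s, and suppose ‖(‖x‖/‖y‖)·y − x‖ > s. Then there exist m ∈ {1, …, 8} and points z_1, …, z_m ∈ ℝⁿ such that: (i) ‖z_1‖ = ⋯ = ‖z_m‖ = t + s and, writing w_0 = x, w_i = z_i for 1 ≤ i ≤ m, w_{m+1} = y, one has ‖w_i − w_{i+1}‖ ≤ ‖y − x‖ for every 0 ≤ i ≤ m; and (ii) for every 0 ≤ i ≤ m, the open ball of radius ‖w_i − w_{i+1}‖/2 centered at (w_i + w_{i+1})/2 is contained in ℝⁿ \ B_t(0), where B_t(0) is the open ball of radius t centered at the origin. -/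
/-!
Let `x'` be the radial projection of `y` to the sphere of radius `t + s`. Walk from `x` to `x'`
along a great circle in seven equal steps: each chord has length at most
`π (t + s) / 7 ≤ 2π s / 7 < s < ‖x' - x‖ ≤ ‖y - x‖`, and the midpoint of a chord of length
`d ≤ s` on that sphere lies at distance `√((t + s)² - d²/4) ≥ t + d/2` from the origin. The last
step goes radially from `x'` to `y`, whose diameter ball avoids `B_t(0)` since `‖x'‖ ≥ t`.
-/

open Real Metric Module
open scoped RealInnerProductSpace

variable {E : Type*} [NormedAddCommGroup E] [InnerProductSpace ℝ E]

lemma exists_norm_eq_one_inner_eq_zero [FiniteDimensional ℝ E] (hE : 2 ≤ finrank ℝ E) (u : E) :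
    ∃ e : E, ‖e‖ = 1 ∧ ⟪u, e⟫ = 0 := by
  have hne : (ℝ ∙ u)ᗮ ≠ ⊥ := by
    rw [Ne, Submodule.orthogonal_eq_bot_iff]
    intro htop
    have := finrank_span_le_card (R := ℝ) ({u} : Set E)
    rw [htop, finrank_top] at this
    simp only [Set.toFinset_singleton, Finset.card_singleton] at this
    omega
  obtain ⟨b, hb, hb0⟩ := Submodule.exists_mem_ne_zero_of_ne_bot hne
  refine ⟨‖b‖⁻¹ • b, by simp [norm_smul, hb0], ?_⟩
  rw [real_inner_smul_right, Submodule.inner_right_of_mem_orthogonal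
    (Submodule.mem_span_singleton_self u) hb, mul_zero]

lemma exists_norm_eq_one_inner_eq_zero_norm_smul_eq [FiniteDimensional ℝ E]
    (hE : 2 ≤ finrank ℝ E) {u w : E} (huw : ⟪u, w⟫ = 0) :
    ∃ e : E, ‖e‖ = 1 ∧ ⟪u, e⟫ = 0 ∧ ‖w‖ • e = w := by
  rcases eq_or_ne w 0 with rfl | hw
  · obtain ⟨e, he, hue⟩ := exists_norm_eq_one_inner_eq_zero hE u
    exact ⟨e, he, hue, by simp⟩
  · refine ⟨‖w‖⁻¹ • w, by simp [norm_smul, hw], ?_, ?_⟩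
    · rw [real_inner_smul_right, huw, mul_zero]
    · rw [smul_smul, mul_inv_cancel₀ (norm_ne_zero_iff.2 hw), one_smul]

lemma norm_smul_add_smul_sq_of_orthonormal {u e : E} (hu : ‖u‖ = 1) (he : ‖e‖ = 1)
    (hue : ⟪u, e⟫ = 0) (a b : ℝ) : ‖a • u + b • e‖ ^ 2 = a ^ 2 + b ^ 2 := by
  rw [norm_add_sq_real, real_inner_smul_left, real_inner_smul_right, hue, norm_smul, norm_smul,
    hu, he]
  simp

lemma exists_eq_cos_smul_add_sin_smul [FiniteDimensional ℝ E] (hE : 2 ≤ finrank ℝ E)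
    {u v : E} (hu : ‖u‖ = 1) (hv : ‖v‖ = 1) :
    ∃ θ ∈ Set.Icc 0 π, ∃ e : E, ‖e‖ = 1 ∧ ⟪u, e⟫ = 0 ∧ v = cos θ • u + sin θ • e := by
  set c := ⟪u, v⟫
  have hc : |c| ≤ 1 := by simpa [hu, hv] using abs_real_inner_le_norm u v
  have huw : ⟪u, v - c • u⟫ = 0 := by
    rw [inner_sub_right, real_inner_smul_right, real_inner_self_eq_norm_sq, hu]
    ring
  have hw : ‖v - c • u‖ = √(1 - c ^ 2) := by
    rw [eq_comm, sqrt_eq_iff_eq_sq (by nlinarith [abs_le.1 hc]) (norm_nonneg _), norm_sub_sq_real,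
      real_inner_smul_right, real_inner_comm, norm_smul, hu, hv]
    simp only [one_pow, norm_eq_abs, mul_one, sq_abs]
    ring
  obtain ⟨e, he, hue, hew⟩ := exists_norm_eq_one_inner_eq_zero_norm_smul_eq hE huw
  refine ⟨arccos c, ⟨arccos_nonneg c, arccos_le_pi c⟩, e, he, hue, ?_⟩
  rw [cos_arccos (abs_le.1 hc).1 (abs_le.1 hc).2, sin_arccos, ← hw, hew]
  abel

lemma norm_cos_smul_add_sin_smul {u e : E} (hu : ‖u‖ = 1) (he : ‖e‖ = 1) (hue : ⟪u, e⟫ = 0)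
    (θ : ℝ) : ‖cos θ • u + sin θ • e‖ = 1 := by
  have h := norm_smul_add_smul_sq_of_orthonormal hu he hue (cos θ) (sin θ)
  rwa [cos_sq_add_sin_sq, pow_eq_one_iff_of_nonneg (norm_nonneg _) two_ne_zero] at h

lemma norm_cos_smul_add_sin_smul_sub_le {u e : E} (hu : ‖u‖ = 1) (he : ‖e‖ = 1)
    (hue : ⟪u, e⟫ = 0) (a b : ℝ) :
    ‖(cos a • u + sin a • e) - (cos b • u + sin b • e)‖ ≤ |a - b| := by
  have hdiff : (cos a • u + sin a • e) - (cos b • u + sin b • e)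
      = (cos a - cos b) • u + (sin a - sin b) • e := by module
  rw [← sq_le_sq₀ (norm_nonneg _) (abs_nonneg _), sq_abs, hdiff,
    norm_smul_add_smul_sq_of_orthonormal hu he hue]
  -- the squared chord is `2 (1 - cos (a - b))`
  nlinarith [one_sub_sq_div_two_le_cos (x := a - b), cos_sub a b, sin_sq_add_cos_sq a,
    sin_sq_add_cos_sq b]

lemma exists_sphere_path_norm_sub_le [FiniteDimensional ℝ E] (hE : 2 ≤ finrank ℝ E)
    {x y : E} {ρ : ℝ} (hρ : 0 < ρ) (hx : ‖x‖ = ρ) (hy : ‖y‖ = ρ) :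
    ∃ γ : ℝ → E, γ 0 = x ∧ γ 1 = y ∧ (∀ a, ‖γ a‖ = ρ) ∧
      ∀ a b, ‖γ a - γ b‖ ≤ π * ρ * |a - b| := by
  have hnorm : ∀ z : E, ‖z‖ = ρ → ‖ρ⁻¹ • z‖ = 1 := fun z hz ↦ by
    rw [norm_smul, hz, norm_inv, Real.norm_of_nonneg hρ.le, inv_mul_cancel₀ hρ.ne']
  have hsmul : ∀ z : E, ρ • ρ⁻¹ • z = z := fun z ↦ smul_inv_smul₀ hρ.ne' z
  obtain ⟨θ, ⟨hθ0, hθπ⟩, e, he, hue, hy'⟩ :=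
    exists_eq_cos_smul_add_sin_smul hE (hnorm x hx) (hnorm y hy)
  refine ⟨fun a ↦ ρ • (cos (θ * a) • ρ⁻¹ • x + sin (θ * a) • e), ?_, ?_, ?_, ?_⟩
  · simp [hsmul]
  · simp [← hy', hsmul]
  · intro a
    rw [norm_smul, norm_cos_smul_add_sin_smul (hnorm x hx) he hue, Real.norm_of_nonneg hρ.le,
      mul_one]
  · intro a b
    rw [← smul_sub, norm_smul, Real.norm_of_nonneg hρ.le]
    calc ρ * ‖_‖ ≤ ρ * |θ * a - θ * b| := by
          gcongr; exact norm_cos_smul_add_sin_smul_sub_le (hnorm x hx) he hue _ _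
      _ ≤ π * ρ * |a - b| := by
          rw [← mul_sub, abs_mul, abs_of_nonneg hθ0, ← mul_assoc, mul_comm ρ]
          gcongr

lemma ball_subset_compl_ball_zero_of_add_le_norm {F : Type*} [SeminormedAddCommGroup F]
    {a : F} {δ t : ℝ} (h : t + δ ≤ ‖a‖) : ball a δ ⊆ (ball 0 t)ᶜ :=
  (ball_disjoint_ball (by rwa [dist_zero_right, add_comm])).subset_compl_right

lemma ball_midpoint_subset_compl_ball_zero_of_norm_eq {a b : E} {s t : ℝ} (ht : 0 ≤ t)
    (ha : ‖a‖ = t + s) (hb : ‖b‖ = t + s) (hab : ‖a - b‖ ≤ s) :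
    ball ((1 / 2 : ℝ) • (a + b)) (‖a - b‖ / 2) ⊆ (ball 0 t)ᶜ := by
  apply ball_subset_compl_ball_zero_of_add_le_norm
  have hpar : ‖a + b‖ ^ 2 + ‖a - b‖ ^ 2 = 4 * (t + s) ^ 2 := by
    rw [norm_add_sq_real, norm_sub_sq_real, ha, hb]
    ring
  rw [norm_smul, Real.norm_of_nonneg (by norm_num)]
  nlinarith [norm_nonneg (a + b), norm_nonneg (a - b)]

lemma ball_midpoint_smul_subset_compl_ball_zero {y : E} {c t : ℝ} (hc : c ≤ 1)
    (ht : t ≤ c * ‖y‖) : ball ((1 / 2 : ℝ) • (c • y + y)) (‖c • y - y‖ / 2) ⊆ (ball 0 t)ᶜ := by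
  apply ball_subset_compl_ball_zero_of_add_le_norm
  have hsum : (1 / 2 : ℝ) • (c • y + y) = ((c + 1) / 2) • y := by module
  have hdiff : c • y - y = (c - 1) • y := by module
  rw [hsum, hdiff, norm_smul, norm_smul, Real.norm_eq_abs, Real.norm_eq_abs,
    abs_of_nonpos (by linarith)]
  nlinarith [le_abs_self ((c + 1) / 2), norm_nonneg y]

lemma norm_div_norm_smul_sub_le {x y : E} (hxy : ‖x‖ ≤ ‖y‖) :
    ‖(‖x‖ / ‖y‖) • y - x‖ ≤ ‖y - x‖ := by
  rcases eq_or_ne y 0 with rfl | hy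
  · simp
  have hy' : 0 < ‖y‖ := norm_pos_iff.2 hy
  set c := ‖x‖ / ‖y‖
  have hcy : c * ‖y‖ = ‖x‖ := div_mul_cancel₀ _ hy'.ne'
  have hc1 : c ≤ 1 := (div_le_one hy').2 hxy
  rw [← sq_le_sq₀ (norm_nonneg _) (norm_nonneg _), norm_sub_sq_real, norm_sub_sq_real,
    real_inner_smul_left, norm_smul, Real.norm_of_nonneg (by positivity), hcy]
  -- the difference of the two sides is at least `(1 - c) (‖y‖ - ‖x‖) ‖y‖ ≥ 0`
  nlinarith [mul_le_mul_of_nonneg_left (real_inner_le_norm y x) (sub_nonneg.2 hc1)]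

lemma norm_div_norm_smul_sub_self {x y : E} (hxy : ‖x‖ ≤ ‖y‖) :
    ‖(‖x‖ / ‖y‖) • y - y‖ = ‖y‖ - ‖x‖ := by
  rcases eq_or_ne y 0 with rfl | hy
  · simpa using hxy
  rw [show (‖x‖ / ‖y‖) • y - y = (‖x‖ / ‖y‖ - 1) • y by module, norm_smul, Real.norm_eq_abs,
    abs_of_nonpos (by rw [sub_nonpos]; exact (div_le_one (norm_pos_iff.2 hy)).2 hxy), neg_sub,
    sub_mul, one_mul, div_mul_cancel₀ _ (norm_ne_zero_iff.2 hy)]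

/-- Chain corollary in `ℝⁿ` (`n ≥ 2`): for `s ≥ t > 0` and `‖y‖ ≥ ‖x‖ = t + s`, if the
radial projection of `y` to the sphere of radius `‖x‖` is at distance more than `s`
from `x`, then `x` and `y` are joined by a chain of at most `8` points of norm `t + s`,
with consecutive gaps at most `‖y - x‖`, whose diameter balls avoid `B_t(0)`. -/
theorem chain_corollary (n : ℕ) (hn : 2 ≤ n) (s t : ℝ) (hts : t ≤ s) (ht : 0 < t)
    (x y : EuclideanSpace ℝ (Fin n))
    (hx : ‖x‖ = t + s) (hxy : ‖x‖ ≤ ‖y‖)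
    (hproj : s < ‖(‖x‖ / ‖y‖) • y - x‖) :
    ∃ (m : ℕ) (w : ℕ → EuclideanSpace ℝ (Fin n)),
      1 ≤ m ∧ m ≤ 8 ∧
      w 0 = x ∧ w (m + 1) = y ∧
      (∀ i, 1 ≤ i → i ≤ m → ‖w i‖ = t + s) ∧
      (∀ i ≤ m, ‖w i - w (i + 1)‖ ≤ ‖y - x‖) ∧
      (∀ i ≤ m,
        Metric.ball (((1 : ℝ) / 2) • (w i + w (i + 1))) (‖w i - w (i + 1)‖ / 2) ⊆
          (Metric.ball (0 : EuclideanSpace ℝ (Fin n)) t)ᶜ) := by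
  have hs : 0 < s := ht.trans_le hts
  have hy : 0 < ‖y‖ := by linarith
  have hx' : ‖(‖x‖ / ‖y‖) • y‖ = t + s := by
    rw [norm_smul, Real.norm_of_nonneg (by positivity), div_mul_cancel₀ _ hy.ne', hx]
  obtain ⟨γ, hγ0, hγ1, hγ, hγlip⟩ :=
    exists_sphere_path_norm_sub_le (by simpa using hn) (by positivity) hx hx'
  -- `π (t + s) / 7 ≤ 2π s / 7 < s` since `π < 3.5`
  have harc : ∀ i : ℕ, ‖γ (i / 7) - γ ((i + 1 : ℕ) / 7)‖ ≤ s := fun i ↦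
    calc _ ≤ π * (t + s) * |(i : ℝ) / 7 - (i + 1 : ℕ) / 7| := hγlip _ _
      _ = π * (t + s) / 7 := by
          rw [Nat.cast_succ, ← sub_div, sub_add_cancel_left, abs_div, abs_neg, abs_one,
            abs_of_pos (by norm_num : (0 : ℝ) < 7)]
          ring
      _ ≤ s := by nlinarith [pi_lt_d2]
  have hgap : s < ‖y - x‖ := hproj.trans_le (norm_div_norm_smul_sub_le hxy)
  let w : ℕ → EuclideanSpace ℝ (Fin n) := fun i ↦ if i ≤ 7 then γ (i / 7) else y
  have hw : ∀ i < 7, w i = γ (i / 7) ∧ w (i + 1) = γ ((i + 1 : ℕ) / 7) := fun i hi ↦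
    ⟨if_pos hi.le, if_pos hi⟩
  have hw7 : w 7 = (‖x‖ / ‖y‖) • y ∧ w 8 = y := ⟨by simp [w, hγ1], rfl⟩
  refine ⟨7, w, by norm_num, by norm_num, by simp [w, hγ0], rfl,
    fun i _ hi ↦ by simp [w, hi, hγ], fun i hi ↦ ?_, fun i hi ↦ ?_⟩
  · rcases hi.lt_or_eq with hi | rfl
    · rw [(hw i hi).1, (hw i hi).2]
      exact (harc i).trans hgap.le
    · rw [hw7.1, hw7.2, norm_div_norm_smul_sub_self hxy]
      linarith [norm_sub_norm_le y x]
  · rcases hi.lt_or_eq with hi | rfl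
    · rw [(hw i hi).1, (hw i hi).2]
      exact ball_midpoint_subset_compl_ball_zero_of_norm_eq ht.le (hγ _) (hγ _) (harc i)
    · rw [hw7.1, hw7.2]
      refine ball_midpoint_smul_subset_compl_ball_zero ((div_le_one hy).2 hxy) ?_
      rw [div_mul_cancel₀ _ hy.ne', hx]
      linarith
end

section
/- Let 1 < p < ∞, let g : ℝ → ℝ be measurable with ∫_ℝ |g(t)|^p dt < ∞, and let u : ℝ → ℝ be nonconstant and satisfy u(x) − u(y) = ∫_y^x g(t) dt for all y ≤ x. Then the (1−1/p)-Hölder ratio of u attains its supremum: there exist x0, y0 ∈ ℝ with x0 ≠ y0 such that for all x ≠ y, |u(x) − u(y)|/|x − y|^{1−1/p} ≤ |u(x0) − u(y0)|/|x0 − y0|^{1−1/p}. -/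
/-!
By Hölder, `|u x - u y| ≤ (∫_{(y,x]} |g|^p)^{1/p} |x - y|^{1-1/p}`. So the ratio is small when
`|x - y|` is small (absolute continuity of `∫ |g|^p`), and also when a point is far out: then
either `(y, x]` misses `[-N, N]`, outside of which `|g|^p` has small mass, or `|x - y|` is so large
that `∫_{[-N,N]} |g|` is negligible against `|x - y|^{1-1/p}`. Hence the ratio drops below half
of a positive value outside a compact set of off-diagonal pairs, and attains its maximum there.
-/

open MeasureTheory Set Filter Topology

theorem MeasureTheory.MemLp.integrable_abs_rpow {α : Type*} [MeasurableSpace α] {μ : Measure α}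
    {p : ℝ} (hp : 0 < p) {g : α → ℝ} (hg : MemLp g (ENNReal.ofReal p) μ) :
    Integrable (fun t => |g t| ^ p) μ := by
  simpa [ENNReal.toReal_ofReal hp.le] using
    hg.integrable_norm_rpow (by simpa using hp) ENNReal.ofReal_ne_top

theorem setIntegral_abs_le_of_memLp {α : Type*} [MeasurableSpace α] {μ : Measure α} {p : ℝ}
    (hp : 1 < p) {g : α → ℝ} (hg : MemLp g (ENNReal.ofReal p) μ) {s : Set α} (hs : μ s ≠ ⊤) :
    ∫ t in s, |g t| ∂μ ≤ (∫ t in s, |g t| ^ p ∂μ) ^ (1 / p) * μ.real s ^ (1 - 1 / p) := by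
  have hpq := Real.HolderConjugate.conjExponent hp
  have : IsFiniteMeasure (μ.restrict s) := isFiniteMeasure_restrict.2 hs
  have H := integral_mul_norm_le_Lp_mul_Lq hpq (hg.restrict s) (memLp_const (1 : ℝ))
  simp only [norm_one, mul_one, Real.norm_eq_abs, Real.one_rpow, integral_const, smul_eq_mul,
    measureReal_restrict_apply_univ] at H
  rwa [one_div p.conjExponent, ← hpq.one_sub_inv, ← one_div] at H

theorem setIntegral_abs_le_mul_rpow_of_setIntegral_rpow_le {α : Type*} [MeasurableSpace α]
    {μ : Measure α} {p : ℝ} (hp : 1 < p) {g : α → ℝ} (hg : MemLp g (ENNReal.ofReal p) μ)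
    {s : Set α} (hs : μ s ≠ ⊤) {L η : ℝ} (hsL : μ.real s ≤ L) (hη : 0 ≤ η)
    (hgs : ∫ t in s, |g t| ^ p ∂μ ≤ η ^ p) :
    ∫ t in s, |g t| ∂μ ≤ η * L ^ (1 - 1 / p) := by
  have hp0 : 0 < p := one_pos.trans hp
  have hroot : (∫ t in s, |g t| ^ p ∂μ) ^ (1 / p) ≤ η := by
    calc (∫ t in s, |g t| ^ p ∂μ) ^ (1 / p) ≤ (η ^ p) ^ (1 / p) :=
          Real.rpow_le_rpow (integral_nonneg fun t => by positivity) hgs (by positivity)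
      _ = η := by rw [← Real.rpow_mul hη, mul_one_div_cancel hp0.ne', Real.rpow_one]
  calc ∫ t in s, |g t| ∂μ
      ≤ (∫ t in s, |g t| ^ p ∂μ) ^ (1 / p) * μ.real s ^ (1 - 1 / p) :=
        setIntegral_abs_le_of_memLp hp hg hs
    _ ≤ η * L ^ (1 - 1 / p) := by
        have : 0 ≤ 1 - 1 / p := sub_nonneg.2 ((div_le_one hp0).2 hp.le)
        gcongr

section
variable {E : Type*} [NormedAddCommGroup E] [NormedSpace ℝ E] {f : ℝ → E}

theorem tendsto_setIntegral_Ioc_of_sub_tendsto_zero (hf : Integrable f) :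
    Tendsto (fun z : ℝ × ℝ => ∫ t in Ioc z.1 z.2, f t) (comap (fun z => z.2 - z.1) (𝓝 0))
      (𝓝 0) := by
  refine hf.tendsto_setIntegral_nhds_zero ?_
  have h := (ENNReal.continuous_ofReal.tendsto 0).comp
    (tendsto_comap : Tendsto (fun z : ℝ × ℝ => z.2 - z.1) (comap (fun z => z.2 - z.1) (𝓝 0)) _)
  simpa [Function.comp_def, Real.volume_Ioc] using h

theorem tendsto_setIntegral_compl_Icc (hf : Integrable f) :
    Tendsto (fun r : ℝ => ∫ t in (Icc (-r) r)ᶜ, f t) atTop (𝓝 0) := by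
  have h := tendsto_setIntegral_of_antitone (μ := volume) (f := f)
    (s := fun r : ℝ => (Icc (-r) r)ᶜ) (fun r => measurableSet_Icc.compl)
    (fun r r' h => compl_subset_compl.2 (Icc_subset_Icc (neg_le_neg h) h)) ⟨0, hf.integrableOn⟩
  have hempty : ⋂ r : ℝ, (Icc (-r) r)ᶜ = ∅ :=
    eq_empty_of_forall_notMem fun t ht => mem_iInter.1 ht |t| ⟨neg_abs_le t, le_abs_self t⟩
  simpa [hempty] using h

end

theorem setIntegral_abs_Ioc_le_add {p : ℝ} (hp : 1 < p) {g : ℝ → ℝ}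
    (hg : MemLp g (ENNReal.ofReal p)) {y x : ℝ} (hyx : y ≤ x) {s : Set ℝ} (hs : MeasurableSet s)
    {η : ℝ} (hη : 0 ≤ η) (hgs : ∫ t in sᶜ, |g t| ^ p ≤ η ^ p) :
    ∫ t in Ioc y x, |g t| ≤ η * (x - y) ^ (1 - 1 / p) + ∫ t in Ioc y x ∩ s, |g t| := by
  have hint : IntegrableOn (fun t => |g t|) (Ioc y x) :=
    (((hg.locallyIntegrable (ENNReal.one_le_ofReal.2 hp.le)).integrableOn_isCompact
      isCompact_Icc).mono_set Ioc_subset_Icc_self).abs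
  have hvol : volume (Ioc y x) ≠ ⊤ := measure_Ioc_lt_top.ne
  have hout : ∫ t in Ioc y x \ s, |g t| ≤ η * (x - y) ^ (1 - 1 / p) := by
    refine setIntegral_abs_le_mul_rpow_of_setIntegral_rpow_le hp hg
      (ne_top_of_le_ne_top hvol (measure_mono sdiff_subset))
      ((measureReal_mono sdiff_subset hvol).trans (by simp [hyx])) hη (le_trans ?_ hgs)
    exact setIntegral_mono_set (hg.integrable_abs_rpow (one_pos.trans hp)).integrableOn
      (Eventually.of_forall fun t => by positivity) (sdiff_subset_compl _ _).eventuallyLE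
  rw [← integral_inter_add_sdiff hs hint]
  linarith

theorem exists_setIntegral_abs_Ioc_le {p : ℝ} (hp : 1 < p) {g : ℝ → ℝ}
    (hg : MemLp g (ENNReal.ofReal p)) {ε : ℝ} (hε : 0 < ε) :
    ∃ δ > 0, ∃ C, ∀ y x, y < x → (x - y < δ ∨ C < |x| ∨ C < |y|) →
      ∫ t in Ioc y x, |g t| ≤ ε * (x - y) ^ (1 - 1 / p) := by
  have hp0 : 0 < p := one_pos.trans hp
  have hα : 0 < 1 - 1 / p := sub_pos.2 ((div_lt_one hp0).2 hp)
  have hgp := hg.integrable_abs_rpow hp0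
  obtain ⟨δ, hδ, hshort⟩ :
      ∃ δ > 0, ∀ y x, y ≤ x → x - y < δ → ∫ t in Ioc y x, |g t| ^ p ≤ ε ^ p := by
    have h := (tendsto_setIntegral_Ioc_of_sub_tendsto_zero hgp).eventually
      (ge_mem_nhds (by positivity : (0 : ℝ) < ε ^ p))
    rw [eventually_comap, Metric.eventually_nhds_iff] at h
    obtain ⟨δ, hδ, h⟩ := h
    refine ⟨δ, hδ, fun y x hyx hxy => h ?_ (y, x) rfl⟩
    rwa [Real.dist_0_eq_abs, abs_of_nonneg (sub_nonneg.2 hyx)]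
  obtain ⟨N, hN⟩ : ∃ N : ℝ, ∫ t in (Icc (-N) N)ᶜ, |g t| ^ p ≤ (ε / 2) ^ p :=
    ((tendsto_setIntegral_compl_Icc hgp).eventually (ge_mem_nhds (by positivity))).exists
  set G := ∫ t in Icc (-N) N, |g t|
  obtain ⟨L, hL, hL0⟩ : ∃ L, G / (ε / 2) ≤ L ^ (1 - 1 / p) ∧ 0 ≤ L :=
    ((tendsto_rpow_atTop hα).eventually_ge_atTop _).and (eventually_ge_atTop 0) |>.exists
  rw [div_le_iff₀' (half_pos hε)] at hL
  refine ⟨δ, hδ, N + L, fun y x hyx hfar => ?_⟩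
  rcases hfar with hshort' | hfar
  · exact setIntegral_abs_le_mul_rpow_of_setIntegral_rpow_le hp hg measure_Ioc_lt_top.ne
      (by simp [hyx.le]) hε.le (hshort y x hyx.le hshort')
  have hcore : ∫ t in Ioc y x ∩ Icc (-N) N, |g t| ≤ ε / 2 * (x - y) ^ (1 - 1 / p) := by
    rcases le_or_gt L (x - y) with hlong | hshortL
    · calc _ ≤ G := setIntegral_mono_set
            ((hg.locallyIntegrable (ENNReal.one_le_ofReal.2 hp.le)).integrableOn_isCompact
              isCompact_Icc).abs
            (Eventually.of_forall fun t => abs_nonneg _) inter_subset_right.eventuallyLE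
        _ ≤ ε / 2 * L ^ (1 - 1 / p) := hL
        _ ≤ _ := by gcongr
    · have : Ioc y x ∩ Icc (-N) N = ∅ := by
        refine eq_empty_of_forall_notMem fun t ⟨⟨h1, h2⟩, h3, h4⟩ => ?_
        rcases hfar with h | h <;> rcases lt_abs.1 h with h | h <;> linarith
      rw [this, Measure.restrict_empty, integral_zero_measure]
      positivity
  calc _ ≤ ε / 2 * (x - y) ^ (1 - 1 / p) + ∫ t in Ioc y x ∩ Icc (-N) N, |g t| :=
        setIntegral_abs_Ioc_le_add hp hg hyx.le measurableSet_Icc (half_pos hε).le hN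
    _ ≤ ε / 2 * (x - y) ^ (1 - 1 / p) + ε / 2 * (x - y) ^ (1 - 1 / p) := by gcongr
    _ = ε * (x - y) ^ (1 - 1 / p) := by ring

/-- On the diagonal the ratio is `0 / 0 = 0`. -/
noncomputable def holderRatio (α : ℝ) (u : ℝ → ℝ) (z : ℝ × ℝ) : ℝ :=
  |u z.1 - u z.2| / |z.1 - z.2| ^ α

theorem holderRatio_swap (α : ℝ) (u : ℝ → ℝ) (z : ℝ × ℝ) :
    holderRatio α u z.swap = holderRatio α u z := by
  simp only [holderRatio, Prod.fst_swap, Prod.snd_swap, abs_sub_comm]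

theorem continuousOn_holderRatio (α : ℝ) {u : ℝ → ℝ} (hu : Continuous u) :
    ContinuousOn (holderRatio α u) {z | z.1 ≠ z.2} := by
  have hne : ∀ z ∈ {z : ℝ × ℝ | z.1 ≠ z.2}, z.1 - z.2 ≠ 0 := fun z hz => sub_ne_zero.2 hz
  refine (((hu.comp continuous_fst).sub (hu.comp continuous_snd)).abs.continuousOn).div
    ((continuous_fst.sub continuous_snd).abs.continuousOn.rpow_const fun z hz =>
      Or.inl (abs_ne_zero.2 (hne z hz)))
    fun z hz => (Real.rpow_pos_of_pos (abs_pos.2 (hne z hz)) α).ne'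

theorem continuous_of_sub_eq_intervalIntegral {E : Type*} [NormedAddCommGroup E]
    [NormedSpace ℝ E] {g u : ℝ → E} (hg : LocallyIntegrable g)
    (hu : ∀ x y, y ≤ x → u x - u y = ∫ t in y..x, g t) : Continuous u := by
  have hprim : u = fun x => u 0 + ∫ t in (0 : ℝ)..x, g t := funext fun x => by
    rcases le_total 0 x with h | h
    · rw [← hu x 0 h, add_sub_cancel]
    · rw [intervalIntegral.integral_symm, ← hu 0 x h, neg_sub, add_sub_cancel]
  rw [hprim]
  exact continuous_const.add (intervalIntegral.continuous_primitive
    (fun a b => (hg.integrableOn_isCompact isCompact_uIcc).intervalIntegrable) 0)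

theorem exists_holderRatio_le {p : ℝ} (hp : 1 < p) {g u : ℝ → ℝ}
    (hg : MemLp g (ENNReal.ofReal p)) (hu : ∀ x y, y ≤ x → u x - u y = ∫ t in y..x, g t)
    {ε : ℝ} (hε : 0 < ε) :
    ∃ δ > 0, ∃ C, ∀ x y, (|x - y| < δ ∨ C < |x| ∨ C < |y|) →
      holderRatio (1 - 1 / p) u (x, y) ≤ ε := by
  obtain ⟨δ, hδ, C, hC⟩ := exists_setIntegral_abs_Ioc_le hp hg hε
  refine ⟨δ, hδ, C, fun x y hxy => ?_⟩
  wlog hyx : y ≤ x generalizing x y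
  · rw [← holderRatio_swap]
    exact this y x (by rw [abs_sub_comm]; tauto) (le_of_not_ge hyx)
  rcases hyx.eq_or_lt with rfl | hlt
  · simpa [holderRatio] using hε.le
  rw [holderRatio, abs_of_pos (sub_pos.2 hlt), div_le_iff₀ (by positivity)]
  calc |u x - u y| = |∫ t in y..x, g t| := by rw [hu x y hlt.le]
    _ ≤ ∫ t in Ioc y x, |g t| := by
      rw [intervalIntegral.integral_of_le hlt.le]; exact abs_integral_le_integral_abs
    _ ≤ ε * (x - y) ^ (1 - 1 / p) :=
      hC y x hlt (by rwa [abs_of_pos (sub_pos.2 hlt)] at hxy)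

theorem IsCompact.exists_forall_ge_of_forall_notMem_le {X β : Type*} [TopologicalSpace X]
    [LinearOrder β] [TopologicalSpace β] [OrderClosedTopology β] {F : X → β} {K : Set X}
    (hK : IsCompact K) (hF : ContinuousOn F K) {z₁ : X} (hz₁ : z₁ ∈ K)
    (hout : ∀ z ∉ K, F z ≤ F z₁) : ∃ z₀ ∈ K, ∀ z, F z ≤ F z₀ := by
  obtain ⟨z₀, hz₀, hmax⟩ := hK.exists_isMaxOn ⟨z₁, hz₁⟩ hF
  refine ⟨z₀, hz₀, fun z => ?_⟩
  by_cases hz : z ∈ K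
  · exact hmax hz
  · exact (hout z hz).trans (hmax hz₁)

/-- In one dimension, the `(1 - 1/p)`-Hölder ratio of a nonconstant function `u` with
integral representation `u x - u y = ∫_y^x g` (where `|g|^p` is integrable) attains its
supremum at a pair of distinct points. -/
theorem holder_ratio_maximized_one_dim (p : ℝ) (hp : 1 < p)
    (g : ℝ → ℝ) (hg : Measurable g)
    (hgp : Integrable (fun t => |g t| ^ p))
    (u : ℝ → ℝ) (hnc : ∃ a b : ℝ, u a ≠ u b)
    (hu : ∀ x y : ℝ, y ≤ x → u x - u y = ∫ t in y..x, g t) :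
    ∃ x0 y0 : ℝ, x0 ≠ y0 ∧
      ∀ x y : ℝ, x ≠ y →
        |u x - u y| / |x - y| ^ (1 - 1 / p) ≤
          |u x0 - u y0| / |x0 - y0| ^ (1 - 1 / p) := by
  obtain ⟨a, b, hab⟩ := hnc
  have hp0 : 0 < p := one_pos.trans hp
  have hgLp : MemLp g (ENNReal.ofReal p) :=
    (integrable_norm_rpow_iff hg.aestronglyMeasurable (by simpa using hp0)
      ENNReal.ofReal_ne_top).1 (by simpa [ENNReal.toReal_ofReal hp0.le] using hgp)
  set F := holderRatio (1 - 1 / p) u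
  have hFab : 0 < F (a, b) :=
    div_pos (abs_pos.2 (sub_ne_zero.2 hab)) (Real.rpow_pos_of_pos
      (abs_pos.2 (sub_ne_zero.2 fun h => hab (congrArg u h))) _)
  obtain ⟨δ, hδ, C, hsmall⟩ := exists_holderRatio_le hp hgLp hu (half_pos hFab)
  set K := (Icc (-C) C ×ˢ Icc (-C) C) ∩ {z : ℝ × ℝ | δ ≤ |z.1 - z.2|}
  have hK : IsCompact K := (isCompact_Icc.prod isCompact_Icc).inter_right
    (isClosed_le continuous_const (continuous_fst.sub continuous_snd).abs)
  have hKdiag : K ⊆ {z | z.1 ≠ z.2} := fun z hz heq =>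
    (hδ.trans_le hz.2).ne' (by rw [heq, sub_self, abs_zero])
  have hout : ∀ z ∉ K, F z ≤ F (a, b) / 2 := fun z hz => hsmall z.1 z.2 (by
    by_contra! h
    exact hz ⟨⟨abs_le.1 h.2.1, abs_le.1 h.2.2⟩, h.1⟩)
  have habK : (a, b) ∈ K := by
    by_contra h; linarith [hout _ h]
  obtain ⟨z₀, hz₀, hmax⟩ := hK.exists_forall_ge_of_forall_notMem_le
    ((continuousOn_holderRatio _ (continuous_of_sub_eq_intervalIntegral
      (hgLp.locallyIntegrable (ENNReal.one_le_ofReal.2 hp.le)) hu)).mono hKdiag)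
    habK fun z hz => (hout z hz).trans (half_le_self hFab.le)
  exact ⟨z₀.1, z₀.2, hKdiag hz₀, fun x y _ => hmax (x, y)⟩
end
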